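/- For every integer m ≥ 0: (x;q)_{m+1} · ∑_{k=0}^m [m+k choose k]_q q^k / (xq;q)_k = [2m+1 choose m]_q + (1/(1+q^{m+1})) · ∑_{k=1}^{m+1} (-1)^k q^{k(k-1)/2} (1+q^k) [2m+2 choose m+1-k]_q x^k. -/
import Mathlib


noncomputable def qPoch (a q : ℂ) (n : ℕ) : ℂ := ∏ i ∈ Finset.range n, (1 - a * q ^ i)

noncomputable def qPochInf (a q : ℂ) : ℂ := ∏' i : ℕ, (1 - a * q ^ i)

noncomputable def qBinom (q : ℂ) (m k : ℕ) : ℂ :=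
  if k ≤ m then qPoch q q m / (qPoch q q k * qPoch q q (m - k)) else 0
noncomputable def tauQ (q : ℂ) (j : ℕ) : ℂ := (-1) ^ j * q ^ (j * (j - 1) / 2)

lemma qPoch_succ (a q : ℂ) (n : ℕ) : qPoch a q (n+1) = qPoch a q n * (1 - a * q ^ n) :=
  Finset.prod_range_succ _ _

lemma qPoch_zero (a q : ℂ) : qPoch a q 0 = 1 := Finset.prod_range_zero _

lemma qPoch_succ' (a q : ℂ) (n : ℕ) : qPoch a q (n+1) = (1 - a) * qPoch (a * q) q n := by
  unfold qPoch
  rw [Finset.prod_range_succ', mul_comm]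
  simp only [pow_zero, mul_one]
  congr 1
  exact Finset.prod_congr rfl fun i _ => by ring

lemma qPoch_add (a q : ℂ) (k d : ℕ) : qPoch a q (k + d) = qPoch a q k * qPoch (a * q ^ k) q d := by
  unfold qPoch
  rw [Finset.prod_range_add]
  congr 1
  exact Finset.prod_congr rfl fun i _ => by rw [pow_add]; ring

lemma poch_q_ne (q : ℂ) (hq : ∀ n : ℕ, (1:ℂ) - q ^ (n+1) ≠ 0) (n : ℕ) : qPoch q q n ≠ 0 := by
  unfold qPoch
  refine Finset.prod_ne_zero_iff.2 fun i _ => ?_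
  have := hq i
  rw [pow_succ'] at this
  exact this

lemma qBinom_of_le {q : ℂ} {n k : ℕ} (h : k ≤ n) :
    qBinom q n k = qPoch q q n / (qPoch q q k * qPoch q q (n - k)) := if_pos h

lemma qBinom_of_gt {q : ℂ} {n k : ℕ} (h : ¬ k ≤ n) : qBinom q n k = 0 := if_neg h

lemma qBinom_zero (q : ℂ) (hq : ∀ n : ℕ, (1:ℂ) - q ^ (n+1) ≠ 0) (n : ℕ) : qBinom q n 0 = 1 := by
  rw [qBinom_of_le (Nat.zero_le n), qPoch_zero, one_mul, Nat.sub_zero,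
    div_self (poch_q_ne q hq n)]

lemma qBinom_self (q : ℂ) (hq : ∀ n : ℕ, (1:ℂ) - q ^ (n+1) ≠ 0) (n : ℕ) : qBinom q n n = 1 := by
  rw [qBinom_of_le le_rfl, Nat.sub_self, qPoch_zero, mul_one,
    div_self (poch_q_ne q hq n)]

lemma qBinom_symm {q : ℂ} {n k : ℕ} (h : k ≤ n) : qBinom q n k = qBinom q n (n - k) := by
  rw [qBinom_of_le h, qBinom_of_le (Nat.sub_le n k), Nat.sub_sub_self h, mul_comm]

lemma pascal1 (q : ℂ) (hq : ∀ n : ℕ, (1:ℂ) - q ^ (n+1) ≠ 0) {n k : ℕ} (hk : k ≤ n) :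
    qBinom q (n+1) (k+1) = qBinom q n (k+1) + q ^ (n - k) * qBinom q n k := by
  rcases eq_or_lt_of_le hk with rfl | hlt
  · rw [qBinom_self q hq, qBinom_self q hq, qBinom_of_gt (by omega), Nat.sub_self]
    simp
  · obtain ⟨d, rfl⟩ : ∃ d, n = k + (d + 1) := ⟨n - k - 1, by omega⟩
    have e1 : k + (d + 1) - k = d + 1 := by omega
    have e2 : k + (d + 1) + 1 - (k + 1) = d + 1 := by omega
    have e3 : k + (d + 1) - (k + 1) = d := by omega
    rw [qBinom_of_le (by omega), qBinom_of_le (by omega), qBinom_of_le (by omega),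
      e1, e2, e3]
    have hP : ∀ j : ℕ, qPoch q q j ≠ 0 := poch_q_ne q hq
    have hf : ∀ j : ℕ, (1:ℂ) - q * q ^ j ≠ 0 := fun j => by
      have := hq j; rwa [pow_succ'] at this
    rw [show k + (d + 1) + 1 = (k + (d+1)) + 1 from rfl, qPoch_succ,
      show k + (d + 1) = (k + d) + 1 from by ring_nf, qPoch_succ q q (k+d),
      show d + 1 = d + 1 from rfl, qPoch_succ q q d, qPoch_succ q q k]
    field_simp [hP, hf]
    ring

lemma pascal2 (q : ℂ) (hq : ∀ n : ℕ, (1:ℂ) - q ^ (n+1) ≠ 0) {n k : ℕ} (hk : k ≤ n) :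
    qBinom q (n+1) (k+1) = q ^ (k+1) * qBinom q n (k+1) + qBinom q n k := by
  rcases eq_or_lt_of_le hk with rfl | hlt
  · rw [qBinom_self q hq, qBinom_self q hq, qBinom_of_gt (by omega)]
    simp
  · obtain ⟨d, rfl⟩ : ∃ d, n = k + (d + 1) := ⟨n - k - 1, by omega⟩
    have e1 : k + (d + 1) - k = d + 1 := by omega
    have e2 : k + (d + 1) + 1 - (k + 1) = d + 1 := by omega
    have e3 : k + (d + 1) - (k + 1) = d := by omega
    rw [qBinom_of_le (by omega), qBinom_of_le (by omega), qBinom_of_le (by omega),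
      e1, e2, e3]
    have hP : ∀ j : ℕ, qPoch q q j ≠ 0 := poch_q_ne q hq
    have hf : ∀ j : ℕ, (1:ℂ) - q * q ^ j ≠ 0 := fun j => by
      have := hq j; rwa [pow_succ'] at this
    rw [show k + (d + 1) + 1 = (k + (d+1)) + 1 from rfl, qPoch_succ,
      show k + (d + 1) = (k + d) + 1 from by ring_nf, qPoch_succ q q (k+d),
      qPoch_succ q q d, qPoch_succ q q k]
    field_simp [hP, hf]
    ring

lemma tau_succ (q : ℂ) (j : ℕ) : tauQ q (j+1) = -(tauQ q j * q ^ j) := by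
  unfold tauQ
  have h1 : (j + 1) * j = j * j + j := by ring
  have h2 : j * (j - 1) + j * 2 = j * j + j := by cases j with
    | zero => simp
    | succ j => simp [Nat.succ_sub_one]; ring
  have e : (j + 1) * (j + 1 - 1) / 2 = j * (j - 1) / 2 + j := by
    rw [Nat.add_sub_cancel, h1]
    have hev : 2 ∣ j * (j - 1) := by
      rcases Nat.even_or_odd j with h | h
      · exact Dvd.dvd.mul_right h.two_dvd _
      · rcases j with _ | j
        · simp
        · simp only [Nat.succ_sub_one]
          exact Dvd.dvd.mul_left (Nat.Odd.sub_odd h odd_one).two_dvd _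
    omega
  rw [e, pow_add, pow_succ]
  ring

lemma tau_zero (q : ℂ) : tauQ q 0 = 1 := by simp [tauQ]

lemma gauss (q : ℂ) (hq : ∀ n : ℕ, (1:ℂ) - q ^ (n+1) ≠ 0) (y : ℂ) :
    ∀ n : ℕ, (∏ i ∈ Finset.range n, (1 - y * q ^ i)) =
      ∑ j ∈ Finset.range (n+1), tauQ q j * qBinom q n j * y ^ j := by
  intro n
  induction n with
  | zero => simp [tau_zero, qBinom_self q hq]
  | succ n ih =>
    rw [Finset.prod_range_succ, ih]
    rw [Finset.sum_range_succ' (fun j => tauQ q j * qBinom q (n+1) j * y ^ j) (n+1)]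
    have key : ∀ j ∈ Finset.range (n+1),
        tauQ q (j+1) * qBinom q (n+1) (j+1) * y ^ (j+1)
          = tauQ q (j+1) * qBinom q n (j+1) * y ^ (j+1)
            + (-(q ^ n)) * (tauQ q j * qBinom q n j * y ^ j) * y := by
      intro j hj
      rw [Finset.mem_range] at hj
      have hjn : j ≤ n := by omega
      have hqq : q ^ (n - j) * q ^ j = q ^ n := by
        rw [← pow_add]; congr 1; omega
      rw [pascal1 q hq hjn, tau_succ, pow_succ]
      calc -(tauQ q j * q ^ j) * (qBinom q n (j+1) + q ^ (n-j) * qBinom q n j) * (y ^ j * y)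
          = -(tauQ q j * q ^ j) * qBinom q n (j+1) * (y ^ j * y)
            + (-(q ^ (n-j) * q ^ j)) * (tauQ q j * qBinom q n j * y ^ j) * y := by ring
        _ = _ := by rw [hqq]
    rw [Finset.sum_congr rfl key, Finset.sum_add_distrib]
    have e1 := Finset.sum_range_succ' (fun j => tauQ q j * qBinom q n j * y ^ j) (n+1)
    have e2 := Finset.sum_range_succ (fun j => tauQ q j * qBinom q n j * y ^ j) (n+1)
    rw [qBinom_of_gt (show ¬ n+1 ≤ n by omega)] at e2
    rw [qBinom_zero q hq n] at e1
    rw [qBinom_zero q hq (n+1)]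
    have part2 : (∑ j ∈ Finset.range (n+1), (-(q ^ n)) * (tauQ q j * qBinom q n j * y ^ j) * y)
        = (∑ j ∈ Finset.range (n+1), tauQ q j * qBinom q n j * y ^ j) * (- (y * q ^ n)) := by
      rw [Finset.sum_mul]
      exact Finset.sum_congr rfl fun j _ => by ring
    rw [part2]
    linear_combination e1 - e2

lemma vdm (q : ℂ) (hq : ∀ n : ℕ, (1:ℂ) - q ^ (n+1) ≠ 0) (b : ℕ) :
    ∀ n a : ℕ, (∑ k ∈ Finset.range (n+1),
      q ^ (k*(b+1)) * qBinom q (a+k) k * qBinom q (b+n-k) (n-k))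
      = qBinom q (a+b+n+1) n := by
  intro n
  induction n with
  | zero =>
    intro a
    simp [qBinom_self q hq, qBinom_zero q hq]
  | succ n ih =>
    intro a
    induction a with
    | zero =>
      rw [Finset.sum_range_succ'
        (fun k => q ^ (k*(b+1)) * qBinom q (0+k) k * qBinom q (b+(n+1)-k) ((n+1)-k)) (n+1)]
      simp only [Nat.zero_add, Nat.add_sub_cancel, Nat.sub_zero, Nat.sub_self]
      have step : ∀ k ∈ Finset.range (n+1),
          q ^ ((k+1)*(b+1)) * qBinom q (k+1) (k+1) * qBinom q (b+(n+1)-(k+1)) ((n+1)-(k+1))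
          = q ^ (b+1) * (q ^ (k*(b+1)) * qBinom q (0+k) k * qBinom q (b+n-k) (n-k)) := by
        intro k hk
        rw [Finset.mem_range] at hk
        have h1 : b+(n+1)-(k+1) = b+n-k := by omega
        have h2 : (n+1)-(k+1) = n-k := by omega
        have h3 : (k+1)*(b+1) = k*(b+1) + (b+1) := by ring
        rw [h1, h2, h3, pow_add, qBinom_self q hq, Nat.zero_add, qBinom_self q hq]
        ring
      rw [Finset.sum_congr rfl step, ← Finset.mul_sum, ih 0]
      -- goal : q^(b+1) * qBinom q (0+b+n+1) n + q^0 * qBinom q 0 0 * qBinom q (b+(n+1)) (n+1)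
      --        = qBinom q (0+b+(n+1)+1) (n+1)
      simp only [Nat.zero_add, pow_zero, one_mul, qBinom_self q hq]
      have hP := pascal1 q hq (show n ≤ b+n+1 by omega)
      have he : b+n+1-n = b+1 := by omega
      rw [he] at hP
      have e2 : b+(n+1)+1 = b+n+1+1 := by omega
      have e3 : b+(n+1) = b+n+1 := by omega
      rw [e2, e3, hP]
      ring
    | succ a iha =>
      rw [Finset.sum_range_succ'
        (fun k => q ^ (k*(b+1)) * qBinom q ((a+1)+k) k * qBinom q (b+(n+1)-k) ((n+1)-k)) (n+1)]
      have step : ∀ k ∈ Finset.range (n+1),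
          q ^ ((k+1)*(b+1)) * qBinom q ((a+1)+(k+1)) (k+1) * qBinom q (b+(n+1)-(k+1)) ((n+1)-(k+1))
          = q ^ ((k+1)*(b+1)) * qBinom q (a+(k+1)) (k+1) * qBinom q (b+(n+1)-(k+1)) ((n+1)-(k+1))
            + (q ^ (a+1) * q ^ (b+1)) *
              (q ^ (k*(b+1)) * qBinom q ((a+1)+k) k * qBinom q (b+n-k) (n-k)) := by
        intro k hk
        have hpas := pascal1 q hq (show k ≤ a+1+k by omega)
        have heq : a+1+k-k = a+1 := by omega
        rw [heq] at hpas
        have h0 : (a+1)+(k+1) = (a+1+k)+1 := by omega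
        have h1 : b+(n+1)-(k+1) = b+n-k := by omega
        have h2 : (n+1)-(k+1) = n-k := by omega
        have h3 : a+(k+1) = a+1+k := by omega
        have h4 : (k+1)*(b+1) = k*(b+1) + (b+1) := by ring
        rw [h0, hpas, h1, h2, h3, h4, pow_add]
        ring
      rw [Finset.sum_congr rfl step, Finset.sum_add_distrib, ← Finset.mul_sum, ih (a+1)]
      -- reassemble first sum with the k=0 term into the a-instance sum
      have re := Finset.sum_range_succ'
        (fun k => q ^ (k*(b+1)) * qBinom q (a+k) k * qBinom q (b+(n+1)-k) ((n+1)-k)) (n+1)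
      rw [iha] at re
      have t0 : q ^ (0*(b+1)) * qBinom q (a+0) 0 * qBinom q (b+(n+1)-0) ((n+1)-0)
          = q ^ (0*(b+1)) * qBinom q ((a+1)+0) 0 * qBinom q (b+(n+1)-0) ((n+1)-0) := by
        rw [qBinom_zero q hq, qBinom_zero q hq]
      rw [t0] at re
      -- now: goal = qBinom q (a+b+n+1+1) ... pascal
      have hP := pascal1 q hq (show n ≤ a+b+n+2 by omega)
      have he : a+b+n+2-n = a+b+2 := by omega
      rw [he] at hP
      have e2 : (a+1)+b+(n+1)+1 = a+b+n+2+1 := by omega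
      have e3 : a+b+(n+1)+1 = a+b+n+2 := by omega
      have e4 : (a+1)+b+n+1 = a+b+n+2 := by omega
      have e5 : q^(a+1) * q^(b+1) = q^(a+b+2) := by rw [← pow_add]; congr 1; omega
      rw [e3] at re
      rw [e2, hP, e4, e5]
      linear_combination -re

lemma one_sub_pow_ne (q : ℂ) (hq1 : ‖q‖ < 1) : ∀ n : ℕ, (1:ℂ) - q ^ (n+1) ≠ 0 := by
  intro n h
  have h2 : q ^ (n+1) = 1 := by linear_combination -h
  have : ‖q ^ (n+1)‖ < 1 := by
    rw [norm_pow]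
    exact pow_lt_one₀ (norm_nonneg q) hq1 (Nat.succ_ne_zero n)
  rw [h2, norm_one] at this
  exact lt_irrefl 1 this

lemma one_add_pow_ne (q : ℂ) (hq1 : ‖q‖ < 1) (n : ℕ) : (1:ℂ) + q ^ (n+1) ≠ 0 := by
  intro h
  have h2 : q ^ (n+1) = -1 := by linear_combination h
  have : ‖q ^ (n+1)‖ < 1 := by
    rw [norm_pow]
    exact pow_lt_one₀ (norm_nonneg q) hq1 (Nat.succ_ne_zero n)
  rw [h2, norm_neg, norm_one] at this
  exact lt_irrefl 1 this

lemma clemma (q : ℂ) (hq : ∀ n : ℕ, (1:ℂ) - q ^ (n+1) ≠ 0) {m k : ℕ} (hk1 : 1 ≤ k)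
    (hkm : k ≤ m) :
    (1 + q ^ k) * qBinom q (2*m+2) (m+1-k)
      = (1 + q ^ (m+1)) * (qBinom q (2*m+1) (m+1-k) + q ^ k * qBinom q (2*m+1) (m-k)) := by
  obtain ⟨d, rfl⟩ : ∃ d, m = k + d := ⟨m - k, by omega⟩
  have e1 : k + d + 1 - k = d + 1 := by omega
  have e2 : k + d - k = d := by omega
  have e3 : 2*(k+d)+2 = (2*(k+d)+1) + 1 := by omega
  rw [e1, e2, e3]
  have hp1 := pascal1 q hq (show d ≤ 2*(k+d)+1 by omega)
  have hp2 := pascal2 q hq (show d ≤ 2*(k+d)+1 by omega)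
  have e4 : 2*(k+d)+1-d = k + (k+d+1) := by omega
  rw [e4] at hp1
  have e5 : q ^ (k + (k+d+1)) = q ^ k * q ^ (k+d+1) := pow_add q _ _
  rw [e5] at hp1
  linear_combination hp1 + q ^ k * hp2

theorem stmt_14 (q x : ℂ) (m : ℕ) (hq0 : 0 < ‖q‖) (hq1 : ‖q‖ < 1)
    (h1 : ∀ k, qPoch (x * q) q k ≠ 0) :
    qPoch x q (m + 1) *
        ∑ k ∈ Finset.range (m + 1), qBinom q (m + k) k * q ^ k / qPoch (x * q) q k =
    qBinom q (2 * m + 1) m + (1 / (1 + q ^ (m + 1))) *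
      ∑ k ∈ Finset.Icc 1 (m + 1),
        (-1) ^ k * q ^ (k * (k - 1) / 2) * (1 + q ^ k) * qBinom q (2 * m + 2) (m + 1 - k) * x ^ k := by
  have hq : ∀ n : ℕ, (1:ℂ) - q ^ (n+1) ≠ 0 := one_sub_pow_ne q hq1
  have hq2 : (1:ℂ) + q ^ (m+1) ≠ 0 := one_add_pow_ne q hq1 m
  have hL : qPoch x q (m + 1) *
        ∑ k ∈ Finset.range (m + 1), qBinom q (m + k) k * q ^ k / qPoch (x * q) q k
      = ∑ j ∈ Finset.range (m+1),
          ((1 - x) * (tauQ q j * x ^ j * q ^ j)) * qBinom q (2*m+1) (m - j) := by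
    rw [Finset.mul_sum]
    have s1 : ∀ k ∈ Finset.range (m+1),
        qPoch x q (m + 1) * (qBinom q (m + k) k * q ^ k / qPoch (x * q) q k)
        = ∑ j ∈ Finset.range (m+1),
            ((1 - x) * (tauQ q j * x ^ j * q ^ j))
              * (q ^ (k*(j+1)) * qBinom q (m + k) k * qBinom q (m - k) j) := by
      intro k hk
      rw [Finset.mem_range] at hk
      obtain ⟨d, rfl⟩ : ∃ d, m = k + d := ⟨m - k, by omega⟩
      have ed : k + d - k = d := by omega
      rw [ed]
      have hdec : qPoch x q (k + d + 1)
          = qPoch (x*q) q k * ((1 - x) * qPoch ((x*q) * q ^ k) q d) := by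
        rw [qPoch_succ' x q (k+d), qPoch_add (x*q) q k d]
        ring
      have hval : qPoch x q (k + d + 1) * (qBinom q (k + d + k) k * q ^ k / qPoch (x*q) q k)
          = qBinom q (k + d + k) k * q ^ k * ((1 - x) * qPoch ((x*q) * q ^ k) q d) := by
        rw [hdec]
        field_simp [h1 k]
      rw [hval]
      have hg : qPoch ((x*q) * q ^ k) q d
          = ∑ j ∈ Finset.range (d+1), tauQ q j * qBinom q d j * ((x*q) * q ^ k) ^ j := by
        unfold qPoch; exact gauss q hq _ d
      rw [hg]
      have hext : ∑ j ∈ Finset.range (d+1), tauQ q j * qBinom q d j * ((x*q) * q ^ k) ^ j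
          = ∑ j ∈ Finset.range (k+d+1), tauQ q j * qBinom q d j * ((x*q) * q ^ k) ^ j := by
        refine Finset.sum_subset (Finset.range_subset_range.2 (by omega)) ?_
        intro j hj hj2
        rw [Finset.mem_range] at hj hj2
        rw [qBinom_of_gt (show ¬ j ≤ d by omega)]
        ring
      rw [hext, Finset.mul_sum, Finset.mul_sum]
      refine Finset.sum_congr rfl fun j hj => ?_
      rw [mul_pow, mul_pow]
      have hp : q ^ k * (q ^ j * (q ^ k) ^ j) = q ^ j * q ^ (k*(j+1)) := by
        rw [← pow_mul, ← pow_add, ← pow_add]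
        congr 1; ring
      calc qBinom q (k+d+k) k * q ^ k * ((1-x) *
              (tauQ q j * qBinom q d j * (x ^ j * q ^ j * (q ^ k) ^ j)))
          = (1-x) * tauQ q j * x ^ j * qBinom q (k+d+k) k * qBinom q d j
              * (q ^ k * (q ^ j * (q ^ k) ^ j)) := by ring
        _ = _ := by rw [hp]; ring
    rw [Finset.sum_congr rfl s1, Finset.sum_comm]
    refine Finset.sum_congr rfl fun j hj => ?_
    rw [Finset.mem_range] at hj
    rw [← Finset.mul_sum]
    congr 1
    -- ∑ k<m+1, q^(k(j+1)) B(m+k)k B(m-k)j = B(2m+1)(m-j)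
    have trunc : ∑ k ∈ Finset.range (m+1),
          q ^ (k*(j+1)) * qBinom q (m + k) k * qBinom q (m - k) j
        = ∑ k ∈ Finset.range ((m-j)+1),
          q ^ (k*(j+1)) * qBinom q (m + k) k * qBinom q (m - k) j := by
      refine (Finset.sum_subset (Finset.range_subset_range.2 (by omega)) ?_).symm
      intro k hk hk2
      rw [Finset.mem_range] at hk hk2
      rw [qBinom_of_gt (show ¬ j ≤ m - k by omega)]
      ring
    rw [trunc]
    have sym : ∀ k ∈ Finset.range ((m-j)+1),
        q ^ (k*(j+1)) * qBinom q (m + k) k * qBinom q (m - k) j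
        = q ^ (k*(j+1)) * qBinom q (m + k) k * qBinom q (j + (m-j) - k) ((m-j) - k) := by
      intro k hk
      rw [Finset.mem_range] at hk
      have hjk : j ≤ m - k := by omega
      rw [qBinom_symm hjk]
      congr 2 <;> omega
    rw [Finset.sum_congr rfl sym, vdm q hq j (m-j) m]
    congr 1
    omega
  have hL2 : ∑ j ∈ Finset.range (m+1),
        ((1 - x) * (tauQ q j * x ^ j * q ^ j)) * qBinom q (2*m+1) (m - j)
      = qBinom q (2*m+1) m
        + ∑ j ∈ Finset.range m, (tauQ q (j+1) * (qBinom q (2*m+1) (m-j)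
            + q ^ (j+1) * qBinom q (2*m+1) (m-(j+1)))) * x ^ (j+1)
        + tauQ q (m+1) * x ^ (m+1) := by
    have expand : ∀ j ∈ Finset.range (m+1),
        ((1 - x) * (tauQ q j * x ^ j * q ^ j)) * qBinom q (2*m+1) (m - j)
        = (tauQ q j * q ^ j * qBinom q (2*m+1) (m-j)) * x ^ j
          - (tauQ q j * q ^ j * qBinom q (2*m+1) (m-j)) * x ^ (j+1) := by
      intro j _
      rw [pow_succ]
      ring
    rw [Finset.sum_congr rfl expand, Finset.sum_sub_distrib]
    rw [Finset.sum_range_succ' (fun j => (tauQ q j * q ^ j * qBinom q (2*m+1) (m-j)) * x ^ j) m]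
    rw [Finset.sum_range_succ (fun j => (tauQ q j * q ^ j * qBinom q (2*m+1) (m-j)) * x ^ (j+1)) m]
    have c0 : (tauQ q 0 * q ^ 0 * qBinom q (2*m+1) (m-0)) * x ^ 0 = qBinom q (2*m+1) m := by
      rw [tau_zero, Nat.sub_zero]
      ring
    have cm : tauQ q m * q ^ m * qBinom q (2*m+1) (m-m) = -tauQ q (m+1) := by
      rw [Nat.sub_self, qBinom_zero q hq, tau_succ]
      ring
    have mid : ∀ j ∈ Finset.range m,
        (tauQ q (j+1) * q ^ (j+1) * qBinom q (2*m+1) (m-(j+1))) * x ^ (j+1)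
          - (tauQ q j * q ^ j * qBinom q (2*m+1) (m-j)) * x ^ (j+1)
        = (tauQ q (j+1) * (qBinom q (2*m+1) (m-j)
            + q ^ (j+1) * qBinom q (2*m+1) (m-(j+1)))) * x ^ (j+1) := by
      intro j _
      linear_combination (-(qBinom q (2*m+1) (m-j)) * x ^ (j+1)) * tau_succ q j
    have midsum : (∑ j ∈ Finset.range m,
          (tauQ q (j+1) * q ^ (j+1) * qBinom q (2*m+1) (m-(j+1))) * x ^ (j+1))
        - (∑ j ∈ Finset.range m,
          (tauQ q j * q ^ j * qBinom q (2*m+1) (m-j)) * x ^ (j+1))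
        = ∑ j ∈ Finset.range m, (tauQ q (j+1) * (qBinom q (2*m+1) (m-j)
            + q ^ (j+1) * qBinom q (2*m+1) (m-(j+1)))) * x ^ (j+1) := by
      rw [← Finset.sum_sub_distrib]
      exact Finset.sum_congr rfl mid
    linear_combination c0 + midsum - x ^ (m+1) * cm
  have hR : qBinom q (2*m+1) m + (1 / (1 + q ^ (m+1))) *
        ∑ k ∈ Finset.Icc 1 (m+1),
          (-1:ℂ) ^ k * q ^ (k*(k-1)/2) * (1 + q ^ k) * qBinom q (2*m+2) (m+1-k) * x ^ k
      = qBinom q (2*m+1) m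
        + ∑ j ∈ Finset.range m, (tauQ q (j+1) * (qBinom q (2*m+1) (m-j)
            + q ^ (j+1) * qBinom q (2*m+1) (m-(j+1)))) * x ^ (j+1)
        + tauQ q (m+1) * x ^ (m+1) := by
    have htau : ∀ k : ℕ, ((-1:ℂ)) ^ k * q ^ (k*(k-1)/2) = tauQ q k := fun k => rfl
    rw [Finset.sum_Icc_succ_top (show 1 ≤ m+1 by omega)]
    have top : (-1:ℂ) ^ (m+1) * q ^ ((m+1)*((m+1)-1)/2) * (1 + q ^ (m+1))
          * qBinom q (2*m+2) (m+1-(m+1)) * x ^ (m+1)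
        = (1 + q ^ (m+1)) * (tauQ q (m+1) * x ^ (m+1)) := by
      rw [Nat.sub_self, qBinom_zero q hq, htau]
      ring
    rw [top]
    have mid : ∀ k ∈ Finset.Icc 1 m,
        (-1:ℂ) ^ k * q ^ (k*(k-1)/2) * (1 + q ^ k) * qBinom q (2*m+2) (m+1-k) * x ^ k
        = (1 + q ^ (m+1)) * ((tauQ q k * (qBinom q (2*m+1) (m+1-k)
            + q ^ k * qBinom q (2*m+1) (m-k))) * x ^ k) := by
      intro k hk
      rw [Finset.mem_Icc] at hk
      rw [htau]
      have := clemma q hq hk.1 hk.2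
      linear_combination tauQ q k * x ^ k * this
    rw [Finset.sum_congr rfl mid, ← Finset.mul_sum, ← mul_add, one_div,
      inv_mul_cancel_left₀ hq2]
    have reidx : ∑ k ∈ Finset.Icc 1 m, (tauQ q k * (qBinom q (2*m+1) (m+1-k)
          + q ^ k * qBinom q (2*m+1) (m-k))) * x ^ k
        = ∑ j ∈ Finset.range m, (tauQ q (j+1) * (qBinom q (2*m+1) (m-j)
            + q ^ (j+1) * qBinom q (2*m+1) (m-(j+1)))) * x ^ (j+1) := by
      rw [← Finset.Ico_add_one_right_eq_Icc, Finset.sum_Ico_eq_sum_range]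
      have em : m + 1 - 1 = m := by omega
      rw [em]
      refine Finset.sum_congr rfl fun j hj => ?_
      rw [Finset.mem_range] at hj
      have e1 : 1 + j = j + 1 := by omega
      have e2 : m + 1 - (j + 1) = m - j := by omega
      rw [e1, e2]
    rw [reidx]
    ring
  rw [hL, hL2, hR]
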